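/- arXiv:1704.00785 — 7 statements merged into one kernel-verified Lean document; each statement's English description precedes it below -/
import Mathlib

section
/- Let L be a Lindblad generator on n×n complex matrices and suppose there is a density matrix ρ̄ and constants C, λ > 0 such that ‖e^{tL}(X) − tr(X)ρ̄‖ ≤ C e^{−λt}‖X‖ for every matrix X and every t ≥ 0. Then for every matrix W with tr(W) = 0: (i) the integral ∫₀^∞ e^{tL}(W) dt converges absolutely; (ii) a matrix X satisfies −L(X) = W if and only if X = ∫₀^∞ e^{tL}(W) dt + λρ̄ for some λ ∈ ℂ; (iii) X = ∫₀^∞ e^{tL}(W) dt is the unique traceless solution of −L(X) = W. -/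
open scoped Matrix MeasureTheory ComplexOrder

attribute [local instance] Matrix.frobeniusNormedAddCommGroup Matrix.frobeniusNormedSpace

/-- Port aid: the topology induced by the Frobenius norm (equal to the product topology). -/
noncomputable abbrev frobeniusTopology {n : ℕ} : TopologicalSpace (Matrix (Fin n) (Fin n) ℂ) :=
  Matrix.frobeniusNormedAddCommGroup.toUniformSpace.toTopologicalSpace

attribute [local instance] frobeniusTopology

/-- The dissipator `D_X(ρ) = XρX† − (1/2)(X†Xρ + ρX†X)`. -/
noncomputable def dissipator {n : ℕ} (X ρ : Matrix (Fin n) (Fin n) ℂ) :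
    Matrix (Fin n) (Fin n) ℂ :=
  X * ρ * Xᴴ - (1 / 2 : ℂ) • (Xᴴ * X * ρ + ρ * (Xᴴ * X))

/-- A map on `n×n` matrices is a Lindblad generator if it has the form
`ρ ↦ −i[H,ρ] + Σ_μ D_{L_μ}(ρ)` with `H` Hermitian. -/
def IsLindblad {n : ℕ} (L : Matrix (Fin n) (Fin n) ℂ → Matrix (Fin n) (Fin n) ℂ) : Prop :=
  ∃ H : Matrix (Fin n) (Fin n) ℂ, H.IsHermitian ∧
    ∃ (m : ℕ) (Lop : Fin m → Matrix (Fin n) (Fin n) ℂ),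
      ∀ ρ, L ρ = (-Complex.I) • (H * ρ - ρ * H) + ∑ μ, dissipator (Lop μ) ρ

/-!
The semigroup `T t = exp (t • L)` converges strongly to the projection `P X = tr X • ρ̄`.
Passing to the limit `t → ∞` in `T (s + t) = T s ∘ T t` gives `T s ∘ P = P = P ∘ T s`;
hence `L ∘ P = 0`, and as `T t x = x` whenever `L x = 0`, the kernel of `L` is the range
of `P`, the line `ℂ ρ̄`. For traceless `W` the orbit `T t W` decays exponentially, so
`Y = ∫₀^∞ T t W` exists, the fundamental theorem of calculus gives
`L Y = lim T t W - W = -W`, and `P Y = ∫ P (T t W) = ∫ P W = 0` makes `Y` traceless.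
The solutions of `-L X = W` are then `Y + ℂ ρ̄`.
-/

open NormedSpace Filter Topology MeasureTheory Set

section OneParameterSemigroup

variable {E : Type*} [NormedAddCommGroup E] [NormedSpace ℂ E] (L : E →L[ℂ] E)

theorem exp_smul_apply_comm (t : ℝ) (x : E) : exp (t • L) (L x) = L (exp (t • L) x) :=
  congr($((Commute.refl L).smul_left t |>.exp_left.eq) x)

theorem tendsto_exp_smul_apply_of_norm_sub_le {P : E →L[ℂ] E} {C lam : ℝ} (hlam : 0 < lam)
    (hconv : ∀ x (t : ℝ), 0 ≤ t →
      ‖exp (t • L) x - P x‖ ≤ C * Real.exp (-lam * t) * ‖x‖)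
    (x : E) : Tendsto (fun t : ℝ => exp (t • L) x) atTop (𝓝 (P x)) := by
  have hdecay : Tendsto (fun t : ℝ => C * Real.exp (-lam * t) * ‖x‖) atTop (𝓝 0) := by
    simpa [Real.exp_neg] using ((Real.tendsto_exp_atTop.comp
      (tendsto_id.const_mul_atTop hlam)).inv_tendsto_atTop.const_mul C).mul_const ‖x‖
  exact tendsto_iff_norm_sub_tendsto_zero.2 <| squeeze_zero'
    (Eventually.of_forall fun _ => norm_nonneg _)
    (eventually_ge_atTop 0 |>.mono fun t ht => hconv x t ht) hdecay

variable [CompleteSpace E]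

theorem exp_add_smul (s t : ℝ) : exp ((s + t) • L) = exp (s • L) * exp (t • L) := by
  rw [add_smul]
  exact exp_add_of_commute_of_mem_ball (𝕂 := ℂ) ((Commute.refl L).smul_left s |>.smul_right t)
    (by simp [expSeries_radius_eq_top]) (by simp [expSeries_radius_eq_top])

theorem hasDerivAt_exp_smul_apply (x : E) (t : ℝ) :
    HasDerivAt (fun u : ℝ => exp (u • L) x) (L (exp (t • L) x)) t :=
  ((ContinuousLinearMap.apply ℂ E x).restrictScalars ℝ).hasFDerivAt.comp_hasDerivAt t
    (hasDerivAt_exp_smul_const' L t)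

theorem continuous_exp_smul_apply (x : E) : Continuous fun t : ℝ => exp (t • L) x :=
  continuous_iff_continuousAt.2 fun t => (hasDerivAt_exp_smul_apply L x t).continuousAt

theorem exp_smul_apply_of_apply_eq_zero {x : E} (hx : L x = 0) (t : ℝ) : exp (t • L) x = x := by
  have hderiv (s : ℝ) : HasDerivAt (fun u : ℝ => exp (u • L) x) 0 s := by
    simpa [← exp_smul_apply_comm, hx] using hasDerivAt_exp_smul_apply L x s
  simpa using is_const_of_deriv_eq_zero (fun s => (hderiv s).differentiableAt)
    (fun s => (hderiv s).deriv) t 0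

theorem apply_integral_exp_smul_Ioi_eq_neg {w : E}
    (hint : IntegrableOn (fun t : ℝ => exp (t • L) w) (Ioi 0))
    (hlim : Tendsto (fun t : ℝ => exp (t • L) w) atTop (𝓝 0)) :
    L (∫ t in Ioi (0 : ℝ), exp (t • L) w) = -w := by
  rw [← L.integral_comp_comm hint, integral_Ioi_of_hasDerivAt_of_tendsto'
    (fun t _ => hasDerivAt_exp_smul_apply L w t) (L.integrable_comp hint) hlim]
  simp

theorem integrableOn_exp_smul_apply_Ioi {P : E →L[ℂ] E} {C lam : ℝ} (hlam : 0 < lam)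
    (hconv : ∀ x (t : ℝ), 0 ≤ t →
      ‖exp (t • L) x - P x‖ ≤ C * Real.exp (-lam * t) * ‖x‖)
    {w : E} (hw : P w = 0) : IntegrableOn (fun t : ℝ => exp (t • L) w) (Ioi 0) := by
  refine Integrable.mono' ((exp_neg_integrableOn_Ioi 0 hlam).const_mul (C * ‖w‖))
    (continuous_exp_smul_apply L w).aestronglyMeasurable.restrict ?_
  filter_upwards [ae_restrict_mem measurableSet_Ioi] with t ht
  have := hconv w t ht.le
  rw [hw, sub_zero] at this
  linarith

variable {L} {P : E →L[ℂ] E}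

theorem exp_smul_apply_limit
    (hP : ∀ x, Tendsto (fun t : ℝ => exp (t • L) x) atTop (𝓝 (P x)))
    (s : ℝ) (x : E) : exp (s • L) (P x) = P x := by
  refine tendsto_nhds_unique ((exp (s • L)).continuous.tendsto _ |>.comp (hP x)) ?_
  have := (hP x).comp (tendsto_atTop_add_const_left atTop s tendsto_id)
  simpa [Function.comp_def, exp_add_smul] using this

theorem limit_exp_smul_apply
    (hP : ∀ x, Tendsto (fun t : ℝ => exp (t • L) x) atTop (𝓝 (P x)))
    (s : ℝ) (x : E) : P (exp (s • L) x) = P x := by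
  refine tendsto_nhds_unique (hP _) ?_
  have := (hP x).comp (tendsto_atTop_add_const_right atTop s tendsto_id)
  simpa [Function.comp_def, exp_add_smul] using this

theorem apply_limit_eq_zero
    (hP : ∀ x, Tendsto (fun t : ℝ => exp (t • L) x) atTop (𝓝 (P x)))
    (x : E) : L (P x) = 0 := by
  have h := hasDerivAt_exp_smul_apply L (P x) 0
  simp only [exp_smul_apply_limit hP] at h
  exact h.unique (hasDerivAt_const 0 (P x))

theorem apply_eq_zero_iff_limit_eq
    (hP : ∀ x, Tendsto (fun t : ℝ => exp (t • L) x) atTop (𝓝 (P x))) (x : E) :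
    L x = 0 ↔ P x = x := by
  refine ⟨fun hx => tendsto_nhds_unique (hP x) ?_, fun hx => hx ▸ apply_limit_eq_zero hP x⟩
  simp [exp_smul_apply_of_apply_eq_zero L hx]

theorem limit_integral_exp_smul_Ioi_eq_zero
    (hP : ∀ x, Tendsto (fun t : ℝ => exp (t • L) x) atTop (𝓝 (P x))) {w : E} (hw : P w = 0)
    (hint : IntegrableOn (fun t : ℝ => exp (t • L) w) (Ioi 0)) :
    P (∫ t in Ioi (0 : ℝ), exp (t • L) w) = 0 := by
  simp [← P.integral_comp_comm hint, limit_exp_smul_apply hP, hw]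

end OneParameterSemigroup

theorem stmt1_general {n : ℕ}
    (L : Matrix (Fin n) (Fin n) ℂ →L[ℂ] Matrix (Fin n) (Fin n) ℂ)
    (ρbar : Matrix (Fin n) (Fin n) ℂ) (htrρ : ρbar.trace = 1)
    (C lam : ℝ) (hlam : 0 < lam)
    (hconv : ∀ (X : Matrix (Fin n) (Fin n) ℂ) (t : ℝ), 0 ≤ t →
      ‖NormedSpace.exp (t • L) X - X.trace • ρbar‖ ≤ C * Real.exp (-lam * t) * ‖X‖)
    (W : Matrix (Fin n) (Fin n) ℂ) (hW : W.trace = 0) :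
    MeasureTheory.IntegrableOn (fun t : ℝ => NormedSpace.exp (t • L) W) (Set.Ioi 0) ∧
    (∀ X : Matrix (Fin n) (Fin n) ℂ,
      -(L X) = W ↔ ∃ c : ℂ,
        X = (∫ t in Set.Ioi (0 : ℝ), NormedSpace.exp (t • L) W) + c • ρbar) ∧
    (-(L (∫ t in Set.Ioi (0 : ℝ), NormedSpace.exp (t • L) W)) = W ∧
      (∫ t in Set.Ioi (0 : ℝ), NormedSpace.exp (t • L) W).trace = 0 ∧
      ∀ X : Matrix (Fin n) (Fin n) ℂ, -(L X) = W → X.trace = 0 →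
        X = ∫ t in Set.Ioi (0 : ℝ), NormedSpace.exp (t • L) W) := by
  obtain ⟨P, hPX⟩ : ∃ P : Matrix (Fin n) (Fin n) ℂ →L[ℂ] Matrix (Fin n) (Fin n) ℂ,
      ∀ X, P X = X.trace • ρbar :=
    ⟨(LinearMap.toContinuousLinearMap (Matrix.traceLinearMap (Fin n) ℂ ℂ)).smulRight ρbar,
      fun _ => rfl⟩
  simp only [← hPX] at hconv
  have hPW : P W = 0 := by rw [hPX, hW, zero_smul]
  have hP := tendsto_exp_smul_apply_of_norm_sub_le L hlam hconv
  have hint := integrableOn_exp_smul_apply_Ioi L hlam hconv hPW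
  set Y := ∫ t in Ioi (0 : ℝ), exp (t • L) W
  have hLY : L Y = -W := apply_integral_exp_smul_Ioi_eq_neg L hint (by simpa [hPW] using hP W)
  have hρ : ρbar ≠ 0 := by rintro rfl; simp at htrρ
  have htrY : Y.trace = 0 := by
    simpa [hPX, hρ] using limit_integral_exp_smul_Ioi_eq_zero hP hPW hint
  have hsol (X : Matrix (Fin n) (Fin n) ℂ) : -(L X) = W ↔ (X - Y).trace • ρbar = X - Y := by
    rw [← hPX, ← apply_eq_zero_iff_limit_eq hP, map_sub, hLY, sub_neg_eq_add,
      add_eq_zero_iff_neg_eq]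
  refine ⟨hint, fun X => ?_, by rw [hLY, neg_neg], htrY, fun X hX htrX => ?_⟩
  · rw [hsol]
    refine ⟨fun h => ⟨_, (sub_eq_iff_eq_add').1 h.symm⟩, ?_⟩
    rintro ⟨c, rfl⟩
    simp [htrρ]
  · have h := (hsol X).1 hX
    rw [Matrix.trace_sub, htrX, htrY, sub_zero, zero_smul, eq_comm, sub_eq_zero] at h
    exact h

/-- if the Lindblad semigroup `e^{tL}` converges exponentially to
`X ↦ tr(X)ρ̄` for a density matrix `ρ̄`, then for every traceless `W`:
(i) `∫₀^∞ e^{tL}(W) dt` converges absolutely;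
(ii) `−L(X) = W` iff `X = ∫₀^∞ e^{tL}(W) dt + c ρ̄` for some `c ∈ ℂ`;
(iii) `∫₀^∞ e^{tL}(W) dt` is the unique traceless solution of `−L(X) = W`. -/
theorem stmt1 {n : ℕ}
    (L : Matrix (Fin n) (Fin n) ℂ →L[ℂ] Matrix (Fin n) (Fin n) ℂ)
    (hL : IsLindblad (⇑L))
    (ρbar : Matrix (Fin n) (Fin n) ℂ) (hψ : ρbar.PosSemidef) (htrρ : ρbar.trace = 1)
    (C lam : ℝ) (hC : 0 < C) (hlam : 0 < lam)
    (hconv : ∀ (X : Matrix (Fin n) (Fin n) ℂ) (t : ℝ), 0 ≤ t →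
      ‖NormedSpace.exp (t • L) X - X.trace • ρbar‖ ≤ C * Real.exp (-lam * t) * ‖X‖)
    (W : Matrix (Fin n) (Fin n) ℂ) (hW : W.trace = 0) :
    MeasureTheory.IntegrableOn (fun t : ℝ => NormedSpace.exp (t • L) W) (Set.Ioi 0) ∧
    (∀ X : Matrix (Fin n) (Fin n) ℂ,
      -(L X) = W ↔ ∃ c : ℂ,
        X = (∫ t in Set.Ioi (0 : ℝ), NormedSpace.exp (t • L) W) + c • ρbar) ∧
    (-(L (∫ t in Set.Ioi (0 : ℝ), NormedSpace.exp (t • L) W)) = W ∧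
      (∫ t in Set.Ioi (0 : ℝ), NormedSpace.exp (t • L) W).trace = 0 ∧
      ∀ X : Matrix (Fin n) (Fin n) ℂ, -(L X) = W → X.trace = 0 →
        X = ∫ t in Set.Ioi (0 : ℝ), NormedSpace.exp (t • L) W) :=
  stmt1_general L ρbar htrρ C lam hlam hconv W hW
end

section
/- Let R and M be Hermitian d×d complex matrices such that: (i) R is positive semidefinite; (ii) for every z ∈ ℂ^d with z†Rz = 0 one has z†Mz ≥ 0; (iii) for every z ∈ ℂ^d with z†Rz = 0 and z†Mz = 0 one has Mz = 0. Then there exists τ ≥ 0 such that M + τR is positive semidefinite. -/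
open scoped Matrix ComplexOrder

/-! Let `N` be the common kernel of `M` and `R` and `C` a complement of `N`. On the unit sphere of
`C`, which is compact, `z†Rz ≥ 0`, and where `z†Rz = 0` the hypotheses force `z†Mz > 0`
(otherwise `z ∈ N ⊓ C = 0`). The open sets `{z | 0 < z†Mz + k z†Rz}`, `k ∈ ℕ`, increase and cover
that sphere, so one of them contains it. Both forms are unchanged by adding vectors of `N` and
scale by `|c|²`, which spreads positivity from the sphere of `C` to all vectors. -/

theorem IsCompact.exists_pos_add_mul_of_nonneg {X : Type*} [TopologicalSpace X] {S : Set X}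
    (hS : IsCompact S) {f g : X → ℝ} (hf : Continuous f) (hg : Continuous g)
    (hg₀ : ∀ x, 0 ≤ g x) (hfg : ∀ x ∈ S, g x = 0 → 0 < f x) :
    ∃ τ : ℝ, 0 ≤ τ ∧ ∀ x ∈ S, 0 < f x + τ * g x := by
  let U : ℕ → Set X := fun k ↦ {x | 0 < f x + k * g x}
  have hUo (k : ℕ) : IsOpen (U k) :=
    isOpen_lt continuous_const (hf.add (continuous_const.mul hg))
  have hU_mono : Monotone U := fun k l hkl x (hx : 0 < f x + k * g x) ↦
    show 0 < f x + l * g x from hx.trans_le (by gcongr; exact hg₀ x)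
  have hSU : S ⊆ ⋃ k, U k := by
    intro x hx
    rcases (hg₀ x).eq_or_lt with h | h
    · exact Set.mem_iUnion.mpr ⟨0, by simpa [U, ← h] using hfg x hx h.symm⟩
    · obtain ⟨k, hk⟩ := exists_nat_gt (-f x / g x)
      refine Set.mem_iUnion.mpr ⟨k, ?_⟩
      show 0 < f x + k * g x
      have := (div_lt_iff₀ h).mp hk
      linarith
  obtain ⟨k, hk⟩ := hS.elim_directed_cover U hUo hSU hU_mono.directed_le
  exact ⟨k, k.cast_nonneg, hk⟩

namespace Matrix

variable {n 𝕜 : Type*} [Fintype n] [RCLike 𝕜]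

open RCLike in
theorem re_dotProduct_mulVec_smul (A : Matrix n n 𝕜) (c : 𝕜) (x : n → 𝕜) :
    re (star (c • x) ⬝ᵥ A *ᵥ (c • x)) = ‖c‖ ^ 2 * re (star x ⬝ᵥ A *ᵥ x) := by
  rw [star_smul, mulVec_smul, smul_dotProduct, dotProduct_smul, smul_smul, smul_eq_mul,
    RCLike.star_def, RCLike.conj_mul, ← ofReal_pow, re_ofReal_mul]

theorem IsHermitian.dotProduct_mulVec_add_of_mulVec_eq_zero {A : Matrix n n 𝕜}
    (hA : A.IsHermitian) (x : n → 𝕜) {v : n → 𝕜} (hv : A *ᵥ v = 0) :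
    star (x + v) ⬝ᵥ A *ᵥ (x + v) = star x ⬝ᵥ A *ᵥ x := by
  have hvx : star v ⬝ᵥ A *ᵥ x = 0 := by
    rw [dotProduct_mulVec, ← hA.eq, ← star_mulVec, hv, star_zero, zero_dotProduct]
  simp [mulVec_add, hv, hvx]

theorem continuous_re_dotProduct_mulVec (A : Matrix n n 𝕜) :
    Continuous fun x : n → 𝕜 ↦ RCLike.re (star x ⬝ᵥ A *ᵥ x) := by
  simp only [dotProduct, mulVec, Pi.star_apply]
  fun_prop

theorem IsHermitian.coe_re_dotProduct_mulVec {A : Matrix n n 𝕜} (hA : A.IsHermitian)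
    (x : n → 𝕜) : (RCLike.re (star x ⬝ᵥ A *ᵥ x) : 𝕜) = star x ⬝ᵥ A *ᵥ x :=
  RCLike.ext (by simp) (by simp [hA.im_star_dotProduct_mulVec_self])

theorem IsHermitian.posSemidef_of_re_nonneg_on_sphere {A : Matrix n n 𝕜} (hA : A.IsHermitian)
    {N C : Submodule 𝕜 (n → 𝕜)} (hNC : Codisjoint N C) (hN : ∀ v ∈ N, A *ᵥ v = 0)
    (hC : ∀ x ∈ C, ‖x‖ = 1 → 0 ≤ RCLike.re (star x ⬝ᵥ A *ᵥ x)) : A.PosSemidef := by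
  refine .of_dotProduct_mulVec_nonneg hA fun z ↦ ?_
  obtain ⟨v, hv, x, hx, rfl⟩ := Submodule.mem_sup.mp (hNC.eq_top ▸ Submodule.mem_top (x := z))
  rw [add_comm, hA.dotProduct_mulVec_add_of_mulVec_eq_zero x (hN v hv),
    ← hA.coe_re_dotProduct_mulVec, RCLike.ofReal_nonneg]
  rcases eq_or_ne x 0 with rfl | hx₀
  · simp
  have hunit : ‖(‖x‖⁻¹ : 𝕜) • x‖ = 1 := by
    rw [norm_smul, norm_inv, RCLike.norm_ofReal, abs_norm,
      inv_mul_cancel₀ (norm_ne_zero_iff.mpr hx₀)]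
  have hscale : x = (‖x‖ : 𝕜) • (‖x‖⁻¹ : 𝕜) • x := by
    rw [smul_smul, mul_inv_cancel₀ (by simpa using hx₀), one_smul]
  rw [hscale, re_dotProduct_mulVec_smul]
  exact mul_nonneg (by positivity) (hC _ (C.smul_mem _ hx) hunit)

theorem re_dotProduct_add_smul_mulVec (A B : Matrix n n 𝕜) (τ : ℝ) (x : n → 𝕜) :
    RCLike.re (star x ⬝ᵥ (A + (τ : 𝕜) • B) *ᵥ x) =
      RCLike.re (star x ⬝ᵥ A *ᵥ x) + τ * RCLike.re (star x ⬝ᵥ B *ᵥ x) := by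
  simp only [algebraMap_smul, add_mulVec, smul_mulVec, dotProduct_add, dotProduct_smul, map_add,
    RCLike.smul_re]

theorem PosSemidef.exists_posSemidef_add_smul {R M : Matrix n n 𝕜} (hR : R.PosSemidef)
    (hM : M.IsHermitian)
    (hMpos : ∀ z, star z ⬝ᵥ R *ᵥ z = 0 → 0 ≤ RCLike.re (star z ⬝ᵥ M *ᵥ z))
    (hMker : ∀ z, star z ⬝ᵥ R *ᵥ z = 0 → star z ⬝ᵥ M *ᵥ z = 0 → M *ᵥ z = 0) :
    ∃ τ : ℝ, 0 ≤ τ ∧ (M + (τ : 𝕜) • R).PosSemidef := by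
  obtain ⟨C, hNC⟩ := (LinearMap.ker M.mulVecLin ⊓ LinearMap.ker R.mulVecLin).exists_isCompl
  have hS : IsCompact (Metric.sphere 0 1 ∩ C : Set (n → 𝕜)) :=
    (isCompact_sphere 0 1).inter_right C.closed_of_finiteDimensional
  have hpos : ∀ x ∈ Metric.sphere 0 1 ∩ C, RCLike.re (star x ⬝ᵥ R *ᵥ x) = 0 →
      0 < RCLike.re (star x ⬝ᵥ M *ᵥ x) := by
    rintro x ⟨hx₁, hxC⟩ hRx
    have hRx : star x ⬝ᵥ R *ᵥ x = 0 := by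
      rw [← hR.isHermitian.coe_re_dotProduct_mulVec, hRx, RCLike.ofReal_zero]
    refine (hMpos x hRx).lt_of_ne fun hMx ↦ ?_
    have hMx : star x ⬝ᵥ M *ᵥ x = 0 := by
      rw [← hM.coe_re_dotProduct_mulVec, ← hMx, RCLike.ofReal_zero]
    have hxN : x ∈ LinearMap.ker M.mulVecLin ⊓ LinearMap.ker R.mulVecLin :=
      ⟨hMker x hRx hMx, (hR.dotProduct_mulVec_zero_iff x).mp hRx⟩
    have : x = 0 := (Submodule.disjoint_def.mp hNC.disjoint) x hxN hxC
    simp [this] at hx₁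
  obtain ⟨τ, hτ, hτS⟩ := hS.exists_pos_add_mul_of_nonneg M.continuous_re_dotProduct_mulVec
    R.continuous_re_dotProduct_mulVec hR.re_dotProduct_nonneg hpos
  refine ⟨τ, hτ, (hM.add (hR.isHermitian.smul ?_)).posSemidef_of_re_nonneg_on_sphere
    hNC.codisjoint ?_ ?_⟩
  · exact RCLike.conj_ofReal τ
  · rintro v ⟨hMv, hRv⟩
    change M *ᵥ v = 0 at hMv
    change R *ᵥ v = 0 at hRv
    rw [add_mulVec, smul_mulVec, hMv, hRv, smul_zero, add_zero]
  · intro x hxC hx₁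
    rw [re_dotProduct_add_smul_mulVec]
    exact (hτS x ⟨mem_sphere_zero_iff_norm.mpr hx₁, hxC⟩).le

end Matrix

theorem stmt2_general {d : ℕ} (R M : Matrix (Fin d) (Fin d) ℂ)
    (hM : M.IsHermitian)
    (hRpsd : R.PosSemidef)
    (hMpos : ∀ z : Fin d → ℂ, star z ⬝ᵥ R.mulVec z = 0 → 0 ≤ (star z ⬝ᵥ M.mulVec z).re)
    (hMker : ∀ z : Fin d → ℂ, star z ⬝ᵥ R.mulVec z = 0 → star z ⬝ᵥ M.mulVec z = 0 →
      M.mulVec z = 0) :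
    ∃ τ : ℝ, 0 ≤ τ ∧ (M + (τ : ℂ) • R).PosSemidef :=
  hRpsd.exists_posSemidef_add_smul hM hMpos hMker

/-- if `R, M` are Hermitian, `R ⪰ 0`, `z†Rz = 0 → z†Mz ≥ 0`, and
`z†Rz = 0 ∧ z†Mz = 0 → Mz = 0`, then `M + τR ⪰ 0` for some `τ ≥ 0`. -/
theorem stmt2 {d : ℕ} (R M : Matrix (Fin d) (Fin d) ℂ)
    (hR : R.IsHermitian) (hM : M.IsHermitian)
    (hRpsd : R.PosSemidef)
    (hMpos : ∀ z : Fin d → ℂ, star z ⬝ᵥ R.mulVec z = 0 → 0 ≤ (star z ⬝ᵥ M.mulVec z).re)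
    (hMker : ∀ z : Fin d → ℂ, star z ⬝ᵥ R.mulVec z = 0 → star z ⬝ᵥ M.mulVec z = 0 →
      M.mulVec z = 0) :
    ∃ τ : ℝ, 0 ≤ τ ∧ (M + (τ : ℂ) • R).PosSemidef :=
  stmt2_general R M hM hRpsd hMpos hMker
end

section
/- Let L(ρ) = −i[H,ρ] + Σ_μ D_{L_μ}(ρ) be a Lindblad generator on n×n complex matrices and let ρ̄ be a density matrix with L(ρ̄) = 0. Then for every vector ν ∈ ℂ^n with ρ̄ν = 0 and every index μ, one has √ρ̄ · L_μ† · ν = 0, where √ρ̄ is the positive semidefinite square root of ρ̄. -/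
open scoped Matrix ComplexOrder

/-- The positive semidefinite square root of a positive semidefinite matrix (as in the
older Mathlib's `Matrix.PosSemidef.sqrt`, which has since been removed). -/
noncomputable def Matrix.PosSemidef.sqrt {n : ℕ} {A : Matrix (Fin n) (Fin n) ℂ}
    (hA : A.PosSemidef) : Matrix (Fin n) (Fin n) ℂ :=
  hA.1.eigenvectorUnitary.1 * Matrix.diagonal ((↑) ∘ (Real.sqrt ·) ∘ hA.1.eigenvalues) *
  (star hA.1.eigenvectorUnitary : Matrix (Fin n) (Fin n) ℂ)

/-!
Pair the stationarity equation with a kernel vector `ν` of `ρ̄`. Since `ρ̄ν = 0` and `ν†ρ̄ = 0`, the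
Hamiltonian part and the anticommutator parts of the dissipators vanish, leaving
`∑ μ ⟨L_μ†ν, ρ̄ L_μ†ν⟩ = 0`. Each summand is nonnegative, so `ρ̄ L_μ†ν = 0`, and then
`√ρ̄ L_μ†ν = 0` because `‖√ρ̄ x‖² = ⟨x, ρ̄ x⟩`.
-/

namespace Matrix.PosSemidef

variable {n : ℕ} {A : Matrix (Fin n) (Fin n) ℂ} (hA : A.PosSemidef)

lemma sqrt_conjTranspose : hA.sqrtᴴ = hA.sqrt := by
  rw [sqrt, conjTranspose_mul, conjTranspose_mul, diagonal_conjTranspose, ← star_eq_conjTranspose,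
    star_star, star_eq_conjTranspose, mul_assoc]
  congr 3
  ext i
  simp

lemma sqrt_mul_self : hA.sqrt * hA.sqrt = A := by
  set U : Matrix (Fin n) (Fin n) ℂ := ↑hA.1.eigenvectorUnitary
  set D := diagonal (((↑) ∘ (Real.sqrt ·) ∘ hA.1.eigenvalues : Fin n → ℂ))
  have hU : star U * U = 1 := Unitary.coe_star_mul_self _
  have hD : D * D = diagonal (RCLike.ofReal ∘ hA.1.eigenvalues) := by
    rw [diagonal_mul_diagonal]
    congr 1
    ext i
    simp [← Complex.ofReal_mul, Real.mul_self_sqrt (hA.eigenvalues_nonneg i)]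
  conv_rhs => rw [hA.1.spectral_theorem, Unitary.conjStarAlgAut_apply]
  calc hA.sqrt * hA.sqrt = U * D * (star U * U) * D * star U := by simp only [sqrt, U, D, mul_assoc]
    _ = _ := by rw [hU, mul_one, mul_assoc U D D, hD]

lemma sqrt_mulVec_eq_zero {x : Fin n → ℂ} (hx : A *ᵥ x = 0) : hA.sqrt *ᵥ x = 0 := by
  have hnorm : star (hA.sqrt *ᵥ x) ⬝ᵥ hA.sqrt *ᵥ x = star x ⬝ᵥ A *ᵥ x := by
    rw [star_mulVec, ← dotProduct_mulVec, mulVec_mulVec, hA.sqrt_conjTranspose, hA.sqrt_mul_self]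
  rw [hx, dotProduct_zero] at hnorm
  exact dotProduct_star_self_eq_zero.mp hnorm

end Matrix.PosSemidef

section KernelVector

open Matrix

variable {ι R : Type*} [Fintype ι] [Semiring R] [StarRing R] {ρ : Matrix ι ι R} {ν : ι → R}

lemma Matrix.IsHermitian.star_vecMul_eq_zero (hρ : ρ.IsHermitian) (hν : ρ *ᵥ ν = 0) :
    star ν ᵥ* ρ = 0 := by
  rw [← hρ.eq, ← star_mulVec, hν, star_zero]

lemma dotProduct_mul_mulVec_eq_zero_left (A : Matrix ι ι R) (hν : ρ *ᵥ ν = 0) :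
    star ν ⬝ᵥ (A * ρ) *ᵥ ν = 0 := by
  rw [← mulVec_mulVec, hν, mulVec_zero, dotProduct_zero]

lemma dotProduct_mul_mulVec_eq_zero_right (A : Matrix ι ι R) (hρ : ρ.IsHermitian)
    (hν : ρ *ᵥ ν = 0) : star ν ⬝ᵥ (ρ * A) *ᵥ ν = 0 := by
  rw [← mulVec_mulVec, dotProduct_mulVec, hρ.star_vecMul_eq_zero hν, zero_dotProduct]

end KernelVector

section Lindblad

open Matrix

lemma dotProduct_dissipator_mulVec {n : ℕ} (X : Matrix (Fin n) (Fin n) ℂ)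
    {ρ : Matrix (Fin n) (Fin n) ℂ} (hρ : ρ.IsHermitian) {ν : Fin n → ℂ} (hν : ρ *ᵥ ν = 0) :
    star ν ⬝ᵥ dissipator X ρ *ᵥ ν = star (Xᴴ *ᵥ ν) ⬝ᵥ ρ *ᵥ (Xᴴ *ᵥ ν) := by
  rw [dissipator, sub_mulVec, smul_mulVec, add_mulVec, dotProduct_sub, dotProduct_smul,
    dotProduct_add, dotProduct_mul_mulVec_eq_zero_left _ hν,
    dotProduct_mul_mulVec_eq_zero_right _ hρ hν, add_zero, smul_zero, sub_zero,
    ← mulVec_mulVec, dotProduct_mulVec, ← vecMul_vecMul, ← dotProduct_mulVec, star_mulVec,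
    conjTranspose_conjTranspose]

lemma dotProduct_lindblad_mulVec {n m : ℕ} (H : Matrix (Fin n) (Fin n) ℂ)
    (Lop : Fin m → Matrix (Fin n) (Fin n) ℂ) {ρ : Matrix (Fin n) (Fin n) ℂ}
    (hρ : ρ.IsHermitian) {ν : Fin n → ℂ} (hν : ρ *ᵥ ν = 0) :
    star ν ⬝ᵥ ((-Complex.I) • (H * ρ - ρ * H) + ∑ μ, dissipator (Lop μ) ρ) *ᵥ ν =
      ∑ μ, star ((Lop μ)ᴴ *ᵥ ν) ⬝ᵥ ρ *ᵥ ((Lop μ)ᴴ *ᵥ ν) := by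
  rw [add_mulVec, smul_mulVec, sub_mulVec, dotProduct_add, dotProduct_smul, dotProduct_sub,
    dotProduct_mul_mulVec_eq_zero_left _ hν, dotProduct_mul_mulVec_eq_zero_right _ hρ hν,
    sub_zero, smul_zero, zero_add, sum_mulVec, dotProduct_sum]
  exact Finset.sum_congr rfl fun μ _ ↦ dotProduct_dissipator_mulVec _ hρ hν

end Lindblad

theorem stmt3_general {n m : ℕ} (H : Matrix (Fin n) (Fin n) ℂ)
    (Lop : Fin m → Matrix (Fin n) (Fin n) ℂ)
    (ρbar : Matrix (Fin n) (Fin n) ℂ) (hpsd : ρbar.PosSemidef)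
    (hstat : (-Complex.I) • (H * ρbar - ρbar * H) + ∑ μ, dissipator (Lop μ) ρbar = 0)
    (ν : Fin n → ℂ) (hν : ρbar.mulVec ν = 0) (μ : Fin m) :
    (hpsd.sqrt * (Lop μ)ᴴ).mulVec ν = 0 := by
  have hsum : ∑ μ, star ((Lop μ)ᴴ *ᵥ ν) ⬝ᵥ ρbar *ᵥ ((Lop μ)ᴴ *ᵥ ν) = 0 := by
    rw [← dotProduct_lindblad_mulVec H Lop hpsd.isHermitian hν, hstat, Matrix.zero_mulVec,
      dotProduct_zero]
  have hterm := (Finset.sum_eq_zero_iff_of_nonneg fun μ _ ↦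
    hpsd.dotProduct_mulVec_nonneg ((Lop μ)ᴴ *ᵥ ν)).mp hsum μ (Finset.mem_univ μ)
  rw [← Matrix.mulVec_mulVec]
  exact hpsd.sqrt_mulVec_eq_zero ((hpsd.dotProduct_mulVec_zero_iff _).mp hterm)

/-- if `ρ̄` is a density matrix with `L(ρ̄) = 0` for a Lindblad generator
`L(ρ) = −i[H,ρ] + Σ_μ D_{L_μ}(ρ)`, then for every `ν` with `ρ̄ν = 0` and every `μ`,
`√ρ̄ · L_μ† · ν = 0`. -/
theorem stmt3 {n m : ℕ} (H : Matrix (Fin n) (Fin n) ℂ) (hH : H.IsHermitian)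
    (Lop : Fin m → Matrix (Fin n) (Fin n) ℂ)
    (ρbar : Matrix (Fin n) (Fin n) ℂ) (hpsd : ρbar.PosSemidef) (htr : ρbar.trace = 1)
    (hstat : (-Complex.I) • (H * ρbar - ρbar * H) + ∑ μ, dissipator (Lop μ) ρbar = 0)
    (ν : Fin n → ℂ) (hν : ρbar.mulVec ν = 0) (μ : Fin m) :
    (hpsd.sqrt * (Lop μ)ᴴ).mulVec ν = 0 :=
  stmt3_general H Lop ρbar hpsd hstat ν hν μ
end

section
/- Let L be a Lindblad generator on n×n complex matrices whose restriction to the subspace of traceless matrices is injective, and let ρ̄ be a density matrix with L(ρ̄) = 0. If Y is a traceless matrix such that ker(ρ̄) ⊆ ker(Y), then the unique traceless matrix X with L(X) = Y satisfies ker(ρ̄) ⊆ ker(X). -/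
open scoped Matrix ComplexOrder

/-!
Let `K = iH - ½ ∑ Lμᴴ Lμ`, so that `L(ρ) = K' ρ + ρ K + ∑ Lμ ρ Lμᴴ` with `K' = -iH - ½ ∑ Lμᴴ Lμ`.
For `v ∈ ker ρ̄`, stationarity gives `0 = v* L(ρ̄) v = ∑ ⟪Lμᴴ v, ρ̄ Lμᴴ v⟫`, so positivity puts
every `Lμᴴ v` in `ker ρ̄`; then `0 = L(ρ̄) v = ρ̄ K v` puts `K v` there too. Hence for `M` with
`ker ρ̄ ⊆ ker M` we get `L(M) v = M K v + ∑ Lμ M Lμᴴ v = 0`: the space of traceless `M` with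
`ker ρ̄ ⊆ ker M` is `L`-invariant. `L` is injective on it, hence onto it by finite dimensionality,
so `Y` has a preimage there, which is `X` by injectivity on traceless matrices.
-/

open Matrix

lemma Matrix.star_dotProduct_mulVec {m l R : Type*} [Fintype m] [Fintype l] [Semiring R]
    [StarRing R] (A : Matrix m l R) (v : m → R) (w : l → R) :
    star v ⬝ᵥ (A *ᵥ w) = star (Aᴴ *ᵥ v) ⬝ᵥ w := by
  rw [dotProduct_mulVec, star_mulVec, conjTranspose_conjTranspose]

section TracelessVanishingOnKer

variable {m R : Type*} [Fintype m] [CommRing R]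

def tracelessVanishingOnKer (ρ : Matrix m m R) : Submodule R (Matrix m m R) where
  carrier := {M | M.trace = 0 ∧ ∀ v, ρ *ᵥ v = 0 → M *ᵥ v = 0}
  add_mem' {A B} hA hB := ⟨by rw [trace_add, hA.1, hB.1, add_zero],
    fun v hv => by rw [add_mulVec, hA.2 v hv, hB.2 v hv, add_zero]⟩
  zero_mem' := ⟨trace_zero m R, fun v _ => zero_mulVec v⟩
  smul_mem' c M hM := ⟨by rw [trace_smul, hM.1, smul_zero],
    fun v hv => by rw [smul_mulVec, hM.2 v hv, smul_zero]⟩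

end TracelessVanishingOnKer

lemma dissipator_eq {n : ℕ} (X ρ : Matrix (Fin n) (Fin n) ℂ) :
    dissipator X ρ =
      -((1 / 2 : ℂ) • (Xᴴ * X)) * ρ - ρ * ((1 / 2 : ℂ) • (Xᴴ * X)) + X * ρ * Xᴴ := by
  rw [dissipator, smul_add, neg_mul, smul_mul_assoc, mul_smul_comm]
  abel

lemma trace_dissipator {n : ℕ} (X ρ : Matrix (Fin n) (Fin n) ℂ) :
    (dissipator X ρ).trace = 0 := by
  rw [dissipator, trace_sub, trace_smul, trace_add, trace_mul_cycle X ρ Xᴴ,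
    trace_mul_comm ρ (Xᴴ * X), smul_eq_mul]
  ring

section Lindblad

variable {n : ℕ} {ι : Type*} [Fintype ι]
  (H : Matrix (Fin n) (Fin n) ℂ) (Lop : ι → Matrix (Fin n) (Fin n) ℂ)

noncomputable def lindblad : Matrix (Fin n) (Fin n) ℂ →ₗ[ℂ] Matrix (Fin n) (Fin n) ℂ where
  toFun ρ := (-Complex.I) • (H * ρ - ρ * H) + ∑ μ, dissipator (Lop μ) ρ
  map_add' A B := by
    simp only [dissipator_eq, mul_add, add_mul, Finset.sum_add_distrib, Finset.sum_sub_distrib]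
    module
  map_smul' c A := by
    simp only [dissipator_eq, mul_smul_comm, smul_mul_assoc, RingHom.id_apply, neg_mul,
      Finset.sum_add_distrib, Finset.sum_sub_distrib, Finset.sum_neg_distrib, ← Finset.smul_sum]
    module

lemma lindblad_apply (ρ : Matrix (Fin n) (Fin n) ℂ) :
    lindblad H Lop ρ = (-Complex.I) • (H * ρ - ρ * H) + ∑ μ, dissipator (Lop μ) ρ :=
  rfl

noncomputable def lindbladDrift : Matrix (Fin n) (Fin n) ℂ :=
  Complex.I • H - (1 / 2 : ℂ) • ∑ μ, (Lop μ)ᴴ * Lop μ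

lemma lindblad_eq_drift (ρ : Matrix (Fin n) (Fin n) ℂ) :
    lindblad H Lop ρ = (-(Complex.I • H) - (1 / 2 : ℂ) • ∑ μ, (Lop μ)ᴴ * Lop μ) * ρ
      + ρ * lindbladDrift H Lop + ∑ μ, Lop μ * ρ * (Lop μ)ᴴ := by
  simp only [lindblad_apply, lindbladDrift, dissipator_eq, Finset.sum_add_distrib,
    Finset.sum_sub_distrib, Finset.sum_neg_distrib, ← Finset.smul_sum, Finset.sum_mul,
    Finset.mul_sum, sub_mul, mul_sub, smul_mul_assoc, mul_smul_comm, neg_mul]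
  module

lemma trace_lindblad (ρ : Matrix (Fin n) (Fin n) ℂ) : (lindblad H Lop ρ).trace = 0 := by
  rw [lindblad_apply, trace_add, trace_smul, trace_sub, trace_mul_comm, sub_self, smul_zero,
    zero_add, trace_sum]
  exact Finset.sum_eq_zero fun μ _ => trace_dissipator _ _

variable {H Lop}

lemma lindblad_mulVec_of_mulVec_eq_zero {M : Matrix (Fin n) (Fin n) ℂ} {v : Fin n → ℂ}
    (hv : M *ᵥ v = 0) :
    lindblad H Lop M *ᵥ v =
      M *ᵥ (lindbladDrift H Lop *ᵥ v) + ∑ μ, Lop μ *ᵥ (M *ᵥ ((Lop μ)ᴴ *ᵥ v)) := by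
  simp only [lindblad_eq_drift, add_mulVec, sum_mulVec, ← mulVec_mulVec, hv, mulVec_zero,
    zero_add]

lemma star_dotProduct_lindblad_mulVec {ρ : Matrix (Fin n) (Fin n) ℂ} (hρ : ρ.IsHermitian)
    {v : Fin n → ℂ} (hv : ρ *ᵥ v = 0) :
    star v ⬝ᵥ (lindblad H Lop ρ *ᵥ v) =
      ∑ μ, star ((Lop μ)ᴴ *ᵥ v) ⬝ᵥ (ρ *ᵥ ((Lop μ)ᴴ *ᵥ v)) := by
  simp only [lindblad_mulVec_of_mulVec_eq_zero hv, dotProduct_add, dotProduct_sum,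
    star_dotProduct_mulVec _ v, hρ.eq, hv, star_zero, zero_dotProduct, zero_add]

section Stationary

variable {ρ : Matrix (Fin n) (Fin n) ℂ} (hρ : ρ.PosSemidef) (hstat : lindblad H Lop ρ = 0)
include hρ hstat

lemma mulVec_conjTranspose_mulVec_eq_zero_of_stationary {v : Fin n → ℂ} (hv : ρ *ᵥ v = 0)
    (μ : ι) : ρ *ᵥ ((Lop μ)ᴴ *ᵥ v) = 0 := by
  have hsum := star_dotProduct_lindblad_mulVec (H := H) (Lop := Lop) hρ.isHermitian hv
  rw [hstat, zero_mulVec, dotProduct_zero, eq_comm,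
    Finset.sum_eq_zero_iff_of_nonneg fun μ _ => hρ.dotProduct_mulVec_nonneg _] at hsum
  exact (hρ.dotProduct_mulVec_zero_iff _).mp (hsum μ (Finset.mem_univ μ))

lemma mulVec_lindbladDrift_mulVec_eq_zero_of_stationary {v : Fin n → ℂ} (hv : ρ *ᵥ v = 0) :
    ρ *ᵥ (lindbladDrift H Lop *ᵥ v) = 0 := by
  have h := lindblad_mulVec_of_mulVec_eq_zero (H := H) (Lop := Lop) hv
  simpa only [hstat, zero_mulVec,
    mulVec_conjTranspose_mulVec_eq_zero_of_stationary hρ hstat hv, mulVec_zero,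
    Finset.sum_const_zero, add_zero, eq_comm] using h

lemma lindblad_mem_tracelessVanishingOnKer_of_stationary {M : Matrix (Fin n) (Fin n) ℂ}
    (hM : M ∈ tracelessVanishingOnKer ρ) : lindblad H Lop M ∈ tracelessVanishingOnKer ρ := by
  refine ⟨trace_lindblad H Lop M, fun v hv => ?_⟩
  rw [lindblad_mulVec_of_mulVec_eq_zero (hM.2 v hv),
    hM.2 _ (mulVec_lindbladDrift_mulVec_eq_zero_of_stationary hρ hstat hv), zero_add]
  exact Finset.sum_eq_zero fun μ _ => by
    rw [hM.2 _ (mulVec_conjTranspose_mulVec_eq_zero_of_stationary hρ hstat hv μ), mulVec_zero]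

end Stationary

end Lindblad

theorem stmt4_general {n m : ℕ}
    (L : Matrix (Fin n) (Fin n) ℂ → Matrix (Fin n) (Fin n) ℂ)
    (H : Matrix (Fin n) (Fin n) ℂ)
    (Lop : Fin m → Matrix (Fin n) (Fin n) ℂ)
    (hL : ∀ ρ, L ρ = (-Complex.I) • (H * ρ - ρ * H) + ∑ μ, dissipator (Lop μ) ρ)
    (hinj : ∀ X Y : Matrix (Fin n) (Fin n) ℂ,
      X.trace = 0 → Y.trace = 0 → L X = L Y → X = Y)
    (ρbar : Matrix (Fin n) (Fin n) ℂ) (hpsd : ρbar.PosSemidef)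
    (hstat : L ρbar = 0)
    (Y : Matrix (Fin n) (Fin n) ℂ) (hYtr : Y.trace = 0)
    (hYker : ∀ v : Fin n → ℂ, ρbar.mulVec v = 0 → Y.mulVec v = 0)
    (X : Matrix (Fin n) (Fin n) ℂ) (hXtr : X.trace = 0) (hX : L X = Y) :
    ∀ v : Fin n → ℂ, ρbar.mulVec v = 0 → X.mulVec v = 0 := by
  obtain rfl : L = lindblad H Lop := funext hL
  have hInjOn : Set.InjOn (lindblad H Lop) (tracelessVanishingOnKer ρbar) :=
    fun A hA B hB hAB => hinj A B hA.1 hB.1 hAB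
  obtain ⟨X', hX'mem, hX'⟩ :=
    (LinearMap.injOn_iff_surjOn fun M =>
      lindblad_mem_tracelessVanishingOnKer_of_stationary hpsd hstat).mp hInjOn
      (show Y ∈ tracelessVanishingOnKer ρbar from ⟨hYtr, hYker⟩)
  obtain rfl : X = X' := hinj X X' hXtr hX'mem.1 (hX.trans hX'.symm)
  exact hX'mem.2

/-- let `L` be a Lindblad generator whose restriction to traceless matrices
is injective, and `ρ̄` a density matrix with `L(ρ̄) = 0`. If `Y` is traceless with
`ker ρ̄ ⊆ ker Y`, then the (unique) traceless `X` with `L(X) = Y` satisfies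
`ker ρ̄ ⊆ ker X`. -/
theorem stmt4 {n m : ℕ}
    (L : Matrix (Fin n) (Fin n) ℂ → Matrix (Fin n) (Fin n) ℂ)
    (H : Matrix (Fin n) (Fin n) ℂ) (hH : H.IsHermitian)
    (Lop : Fin m → Matrix (Fin n) (Fin n) ℂ)
    (hL : ∀ ρ, L ρ = (-Complex.I) • (H * ρ - ρ * H) + ∑ μ, dissipator (Lop μ) ρ)
    (hinj : ∀ X Y : Matrix (Fin n) (Fin n) ℂ,
      X.trace = 0 → Y.trace = 0 → L X = L Y → X = Y)
    (ρbar : Matrix (Fin n) (Fin n) ℂ) (hpsd : ρbar.PosSemidef) (htr : ρbar.trace = 1)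
    (hstat : L ρbar = 0)
    (Y : Matrix (Fin n) (Fin n) ℂ) (hYtr : Y.trace = 0)
    (hYker : ∀ v : Fin n → ℂ, ρbar.mulVec v = 0 → Y.mulVec v = 0)
    (X : Matrix (Fin n) (Fin n) ℂ) (hXtr : X.trace = 0) (hX : L X = Y) :
    ∀ v : Fin n → ℂ, ρbar.mulVec v = 0 → X.mulVec v = 0 :=
  stmt4_general L H Lop hL hinj ρbar hpsd hstat Y hYtr hYker X hXtr hX
end

section
/- Let L(ρ) = −i[H,ρ] + Σ_μ D_{L_μ}(ρ) be a Lindblad generator on n×n complex matrices and let ρ̄ be a matrix with L(ρ̄) = 0. Then for all n×n matrices X and Y: L(Xρ̄)Y† + X·L(ρ̄Y†) = L(Xρ̄Y†) − Σ_μ [L_μ, X] ρ̄ [L_μ, Y]†. -/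
open scoped Matrix

lemma key_diss {n : ℕ} (A ρ X Y : Matrix (Fin n) (Fin n) ℂ) :
    dissipator A (X * ρ) * Yᴴ + X * dissipator A (ρ * Yᴴ)
      = dissipator A (X * ρ * Yᴴ) + X * dissipator A ρ * Yᴴ
        - (A * X - X * A) * ρ * (A * Y - Y * A)ᴴ := by
  simp only [dissipator, Matrix.conjTranspose_sub, Matrix.conjTranspose_mul,
    mul_sub, sub_mul, mul_add, add_mul, smul_add, smul_sub,
    Matrix.mul_smul, Matrix.smul_mul, mul_assoc]
  module

lemma key_ham {n : ℕ} (H ρ X Y : Matrix (Fin n) (Fin n) ℂ) :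
    (-Complex.I) • (H * (X * ρ) - X * ρ * H) * Yᴴ
      + X * ((-Complex.I) • (H * (ρ * Yᴴ) - ρ * Yᴴ * H))
    = (-Complex.I) • (H * (X * ρ * Yᴴ) - X * ρ * Yᴴ * H)
      + X * ((-Complex.I) • (H * ρ - ρ * H)) * Yᴴ := by
  simp only [smul_sub, mul_sub, sub_mul, Matrix.mul_smul, Matrix.smul_mul, mul_assoc]
  module

/-- for a Lindblad generator `L(ρ) = −i[H,ρ] + Σ_μ D_{L_μ}(ρ)` with
`L(ρ̄) = 0`, one has
`L(Xρ̄)Y† + X·L(ρ̄Y†) = L(Xρ̄Y†) − Σ_μ [L_μ,X] ρ̄ [L_μ,Y]†`. -/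
theorem stmt7 {n m : ℕ}
    (L : Matrix (Fin n) (Fin n) ℂ → Matrix (Fin n) (Fin n) ℂ)
    (H : Matrix (Fin n) (Fin n) ℂ) (hH : H.IsHermitian)
    (Lop : Fin m → Matrix (Fin n) (Fin n) ℂ)
    (hL : ∀ ρ, L ρ = (-Complex.I) • (H * ρ - ρ * H) + ∑ μ, dissipator (Lop μ) ρ)
    (ρbar : Matrix (Fin n) (Fin n) ℂ) (hstat : L ρbar = 0)
    (X Y : Matrix (Fin n) (Fin n) ℂ) :
    L (X * ρbar) * Yᴴ + X * L (ρbar * Yᴴ)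
      = L (X * ρbar * Yᴴ)
        - ∑ μ, (Lop μ * X - X * Lop μ) * ρbar * (Lop μ * Y - Y * Lop μ)ᴴ := by
  have hXL : X * L ρbar * Yᴴ = 0 := by rw [hstat]; simp
  have keysum :
      (∑ μ, dissipator (Lop μ) (X * ρbar)) * Yᴴ
        + X * ∑ μ, dissipator (Lop μ) (ρbar * Yᴴ)
      = ∑ μ, dissipator (Lop μ) (X * ρbar * Yᴴ)
        + X * (∑ μ, dissipator (Lop μ) ρbar) * Yᴴ
        - ∑ μ, (Lop μ * X - X * Lop μ) * ρbar * (Lop μ * Y - Y * Lop μ)ᴴ := by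
    rw [Finset.sum_mul, Finset.mul_sum, Finset.mul_sum, Finset.sum_mul,
      ← Finset.sum_add_distrib, ← Finset.sum_add_distrib, ← Finset.sum_sub_distrib]
    exact Finset.sum_congr rfl fun μ _ => key_diss (Lop μ) ρbar X Y
  have main : L (X * ρbar) * Yᴴ + X * L (ρbar * Yᴴ)
      = (L (X * ρbar * Yᴴ)
          - ∑ μ, (Lop μ * X - X * Lop μ) * ρbar * (Lop μ * Y - Y * Lop μ)ᴴ)
        + X * L ρbar * Yᴴ := by
    simp only [hL, add_mul, mul_add]
    calc
      (-Complex.I) • (H * (X * ρbar) - X * ρbar * H) * Yᴴ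
          + (∑ μ, dissipator (Lop μ) (X * ρbar)) * Yᴴ
          + (X * ((-Complex.I) • (H * (ρbar * Yᴴ) - ρbar * Yᴴ * H))
            + X * ∑ μ, dissipator (Lop μ) (ρbar * Yᴴ))
        = ((-Complex.I) • (H * (X * ρbar) - X * ρbar * H) * Yᴴ
            + X * ((-Complex.I) • (H * (ρbar * Yᴴ) - ρbar * Yᴴ * H)))
          + ((∑ μ, dissipator (Lop μ) (X * ρbar)) * Yᴴ
            + X * ∑ μ, dissipator (Lop μ) (ρbar * Yᴴ)) := by abel
      _ = ((-Complex.I) • (H * (X * ρbar * Yᴴ) - X * ρbar * Yᴴ * H)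
            + X * ((-Complex.I) • (H * ρbar - ρbar * H)) * Yᴴ)
          + (∑ μ, dissipator (Lop μ) (X * ρbar * Yᴴ)
            + X * (∑ μ, dissipator (Lop μ) ρbar) * Yᴴ
            - ∑ μ, (Lop μ * X - X * Lop μ) * ρbar * (Lop μ * Y - Y * Lop μ)ᴴ) := by
        rw [key_ham, keysum]
      _ = _ := by abel
  rw [main, hXL, add_zero]
end

section
/- Let L(ρ) = −i[H,ρ] + Σ_μ D_{L_μ}(ρ) be a Lindblad generator on n×n complex matrices and let ρ̄ be a density matrix with L(ρ̄) = 0. Let A_1,…,A_m and F_1,…,F_m be n×n matrices such that tr(F_k ρ̄) = 0 and −L(F_k ρ̄) = A_k ρ̄ − tr(A_k ρ̄) ρ̄ for each k. Then the m×m matrix X with entries X_{k,j} = tr( F_j ρ̄ A_k† + A_j ρ̄ F_k† ) is Hermitian and positive semidefinite. In particular, for a single pair (A, F) with tr(Fρ̄) = 0 and −L(Fρ̄) = Aρ̄ − tr(Aρ̄)ρ̄, one has tr( F ρ̄ A† + A ρ̄ F† ) ≥ 0. -/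
/-!
Write `𝓛*` for the Heisenberg-picture dual of the Lindbladian, `tr (𝓛* X · M) = tr (X · 𝓛 M)`.
Its failure to be a derivation is measured by the dissipative part alone:
`𝓛* (B† C) - 𝓛* (B†) C - B† 𝓛* (C) = Σ_μ [L_μ, B]† [L_μ, C]`.
Pairing this with a Hermitian stationary state `ρ̄` and eliminating `A_k ρ̄` through the defining
equation of `F_k` turns the matrix entries into `X_{kj} = Σ_μ tr ([L_μ, F_k]† [L_μ, F_j] ρ̄)`,
a sum of Gram matrices for the semi-inner products `⟨B, C⟩ = tr (B† C ρ̄)`, hence positive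
semidefinite.
-/

open scoped Matrix ComplexOrder

open Matrix

theorem posSemidef_of_trace_conjTranspose_mul_mul {𝕜 n ι : Type*} [RCLike 𝕜] [Fintype n]
    [Fintype ι] {ρ : Matrix n n 𝕜} (hρ : ρ.PosSemidef) (V : ι → Matrix n n 𝕜) :
    (of fun k j => ((V k)ᴴ * V j * ρ).trace).PosSemidef := by
  classical
  open MatrixOrder in
  obtain ⟨S, hS, rfl⟩ : ∃ S : Matrix n n 𝕜, Sᴴ = S ∧ S * S = ρ :=
    ⟨CFC.sqrt ρ, (CFC.sqrt_nonneg ρ).posSemidef.isHermitian, CFC.sqrt_mul_sqrt_self ρ hρ.nonneg⟩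
  have hcycle (k j : ι) :
      ((V k)ᴴ * V j * (S * S)).trace = ((V k * S)ᴴ * (V j * S)).trace := by
    rw [conjTranspose_mul, hS, ← mul_assoc, trace_mul_cycle, ← mul_assoc, ← mul_assoc]
  convert posSemidef_conjTranspose_mul_self (of fun (ab : n × n) k => (V k * S) ab.2 ab.1)
  ext k j
  rw [of_apply, hcycle]
  simp only [of_apply, trace, diag_apply, mul_apply (M := (V k * S)ᴴ),
    mul_apply (M := (of _)ᴴ), conjTranspose_apply, Fintype.sum_prod_type]

section Lindblad

variable {n : ℕ} {ι : Type*} [Fintype ι]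

noncomputable def lindbladian (H : Matrix (Fin n) (Fin n) ℂ) (Lop : ι → Matrix (Fin n) (Fin n) ℂ)
    (ρ : Matrix (Fin n) (Fin n) ℂ) : Matrix (Fin n) (Fin n) ℂ :=
  (-Complex.I) • (H * ρ - ρ * H) + ∑ μ, dissipator (Lop μ) ρ

noncomputable def dissipatorDual (X Y : Matrix (Fin n) (Fin n) ℂ) : Matrix (Fin n) (Fin n) ℂ :=
  Xᴴ * Y * X - (1 / 2 : ℂ) • (Xᴴ * X * Y + Y * (Xᴴ * X))

noncomputable def lindbladianDual (H : Matrix (Fin n) (Fin n) ℂ)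
    (Lop : ι → Matrix (Fin n) (Fin n) ℂ) (X : Matrix (Fin n) (Fin n) ℂ) :
    Matrix (Fin n) (Fin n) ℂ :=
  Complex.I • (H * X - X * H) + ∑ μ, dissipatorDual (Lop μ) X

theorem trace_dissipatorDual_mul (L X M : Matrix (Fin n) (Fin n) ℂ) :
    (dissipatorDual L X * M).trace = (X * dissipator L M).trace := by
  have h₁ : (Lᴴ * (X * (L * M))).trace = (X * (L * (M * Lᴴ))).trace := by
    rw [trace_mul_comm, mul_assoc, mul_assoc]
  have h₂ : (Lᴴ * (L * (X * M))).trace = (X * (M * (Lᴴ * L))).trace := by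
    rw [← mul_assoc, trace_mul_comm, mul_assoc]
  simp only [dissipatorDual, dissipator, sub_mul, mul_sub, add_mul, mul_add, Matrix.smul_mul,
    Matrix.mul_smul, trace_sub, trace_add, trace_smul, smul_eq_mul, mul_assoc, h₁, h₂]
  ring

theorem trace_lindbladianDual_mul (H : Matrix (Fin n) (Fin n) ℂ)
    (Lop : ι → Matrix (Fin n) (Fin n) ℂ) (X M : Matrix (Fin n) (Fin n) ℂ) :
    (lindbladianDual H Lop X * M).trace = (X * lindbladian H Lop M).trace := by
  have hH : (H * (X * M)).trace = (X * (M * H)).trace := by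
    rw [trace_mul_comm, mul_assoc]
  simp only [lindbladianDual, lindbladian, add_mul, mul_add, trace_add, Finset.sum_mul,
    Finset.mul_sum, trace_sum, trace_dissipatorDual_mul, Matrix.smul_mul, Matrix.mul_smul,
    sub_mul, mul_sub, trace_smul, trace_sub, smul_eq_mul, mul_assoc, hH]
  ring

theorem dissipatorDual_conjTranspose_mul (L B C : Matrix (Fin n) (Fin n) ℂ) :
    dissipatorDual L (Bᴴ * C) = dissipatorDual L Bᴴ * C + Bᴴ * dissipatorDual L C
      + ⁅L, B⁆ᴴ * ⁅L, C⁆ := by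
  simp only [dissipatorDual, Ring.lie_def, conjTranspose_sub, conjTranspose_mul, sub_mul,
    mul_sub, add_mul, mul_add, Matrix.smul_mul, Matrix.mul_smul, smul_add, mul_assoc]
  module

theorem lindbladianDual_conjTranspose_mul (H : Matrix (Fin n) (Fin n) ℂ)
    (Lop : ι → Matrix (Fin n) (Fin n) ℂ) (B C : Matrix (Fin n) (Fin n) ℂ) :
    lindbladianDual H Lop (Bᴴ * C) = lindbladianDual H Lop Bᴴ * C + Bᴴ * lindbladianDual H Lop C
      + ∑ μ, ⁅Lop μ, B⁆ᴴ * ⁅Lop μ, C⁆ := by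
  simp only [lindbladianDual, dissipatorDual_conjTranspose_mul, Finset.sum_add_distrib,
    add_mul, mul_add, Finset.sum_mul, Finset.mul_sum, Matrix.smul_mul, Matrix.mul_smul, sub_mul,
    mul_sub, smul_sub, mul_assoc]
  abel

theorem conjTranspose_dissipator (L M : Matrix (Fin n) (Fin n) ℂ) :
    (dissipator L M)ᴴ = dissipator L Mᴴ := by
  have hhalf : star (1 / 2 : ℂ) = 1 / 2 := by simp
  simp only [dissipator, conjTranspose_sub, conjTranspose_smul, conjTranspose_add,
    conjTranspose_mul, conjTranspose_conjTranspose, hhalf, mul_assoc]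
  module

theorem conjTranspose_lindbladian {H : Matrix (Fin n) (Fin n) ℂ} (hH : H.IsHermitian)
    (Lop : ι → Matrix (Fin n) (Fin n) ℂ) (M : Matrix (Fin n) (Fin n) ℂ) :
    (lindbladian H Lop M)ᴴ = lindbladian H Lop Mᴴ := by
  simp only [lindbladian, conjTranspose_add, conjTranspose_sum, conjTranspose_dissipator,
    conjTranspose_smul, conjTranspose_sub, conjTranspose_mul, hH.eq, star_neg,
    Complex.star_def, Complex.conj_I, neg_neg]
  module

theorem trace_conjTranspose_mul_lindbladian_mul_add {H : Matrix (Fin n) (Fin n) ℂ}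
    (hH : H.IsHermitian) (Lop : ι → Matrix (Fin n) (Fin n) ℂ) {ρ : Matrix (Fin n) (Fin n) ℂ}
    (hρ : ρ.IsHermitian) (B C : Matrix (Fin n) (Fin n) ℂ) :
    (Bᴴ * lindbladian H Lop (C * ρ)).trace + ((lindbladian H Lop (B * ρ))ᴴ * C).trace
      = (Bᴴ * C * lindbladian H Lop ρ).trace - ∑ μ, (⁅Lop μ, B⁆ᴴ * ⁅Lop μ, C⁆ * ρ).trace := by
  have h₁ : (Bᴴ * lindbladian H Lop (C * ρ)).trace
      = (lindbladianDual H Lop Bᴴ * C * ρ).trace := by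
    rw [mul_assoc, trace_lindbladianDual_mul]
  have h₂ : ((lindbladian H Lop (B * ρ))ᴴ * C).trace
      = (Bᴴ * lindbladianDual H Lop C * ρ).trace := by
    rw [conjTranspose_lindbladian hH, conjTranspose_mul, hρ.eq, trace_mul_comm,
      ← trace_lindbladianDual_mul, ← mul_assoc, trace_mul_comm, ← mul_assoc]
  rw [h₁, h₂, ← trace_lindbladianDual_mul, lindbladianDual_conjTranspose_mul]
  simp only [add_mul, trace_add, Finset.sum_mul, trace_sum]
  ring

theorem trace_response_eq_sum {H : Matrix (Fin n) (Fin n) ℂ} (hH : H.IsHermitian)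
    {Lop : ι → Matrix (Fin n) (Fin n) ℂ} {ρ : Matrix (Fin n) (Fin n) ℂ} (hρ : ρ.IsHermitian)
    (hstat : lindbladian H Lop ρ = 0) {A₁ F₁ A₂ F₂ : Matrix (Fin n) (Fin n) ℂ}
    (htr₁ : (F₁ * ρ).trace = 0) (htr₂ : (F₂ * ρ).trace = 0)
    (heq₁ : -lindbladian H Lop (F₁ * ρ) = A₁ * ρ - (A₁ * ρ).trace • ρ)
    (heq₂ : -lindbladian H Lop (F₂ * ρ) = A₂ * ρ - (A₂ * ρ).trace • ρ) :
    (F₂ * ρ * A₁ᴴ + A₂ * ρ * F₁ᴴ).trace = ∑ μ, (⁅Lop μ, F₁⁆ᴴ * ⁅Lop μ, F₂⁆ * ρ).trace := by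
  have hA₁ : A₁ * ρ = -lindbladian H Lop (F₁ * ρ) + (A₁ * ρ).trace • ρ := by rw [heq₁]; abel
  have hA₂ : A₂ * ρ = -lindbladian H Lop (F₂ * ρ) + (A₂ * ρ).trace • ρ := by rw [heq₂]; abel
  have htr₁' : (F₁ᴴ * ρ).trace = 0 := by
    rw [trace_mul_comm, ← hρ.eq, ← conjTranspose_mul, trace_conjTranspose, htr₁, star_zero]
  have t₁ : (F₂ * ρ * A₁ᴴ).trace = -((lindbladian H Lop (F₁ * ρ))ᴴ * F₂).trace := by
    rw [mul_assoc, ← hρ.eq, ← conjTranspose_mul, hρ.eq, hA₁]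
    simp only [conjTranspose_add, conjTranspose_neg, conjTranspose_smul, hρ.eq, mul_add, mul_neg,
      Algebra.mul_smul_comm, trace_add, trace_neg, trace_smul, htr₂, smul_eq_mul, mul_zero,
      add_zero, neg_inj]
    exact trace_mul_comm _ _
  have t₂ : (A₂ * ρ * F₁ᴴ).trace = -(F₁ᴴ * lindbladian H Lop (F₂ * ρ)).trace := by
    rw [trace_mul_comm, hA₂]
    simp [mul_add, trace_add, htr₁']
  have key := trace_conjTranspose_mul_lindbladian_mul_add hH Lop hρ F₁ F₂
  rw [hstat, mul_zero, trace_zero, zero_sub] at key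
  rw [trace_add, t₁, t₂]
  linear_combination -key

theorem posSemidef_response {H : Matrix (Fin n) (Fin n) ℂ} (hH : H.IsHermitian)
    {Lop : ι → Matrix (Fin n) (Fin n) ℂ} {ρ : Matrix (Fin n) (Fin n) ℂ} (hρ : ρ.PosSemidef)
    (hstat : lindbladian H Lop ρ = 0) {κ : Type*} [Fintype κ]
    {A F : κ → Matrix (Fin n) (Fin n) ℂ}
    (hFtr : ∀ k, (F k * ρ).trace = 0)
    (hFeq : ∀ k, -lindbladian H Lop (F k * ρ) = A k * ρ - (A k * ρ).trace • ρ) :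
    (of fun k j => (F j * ρ * (A k)ᴴ + A j * ρ * (F k)ᴴ).trace).PosSemidef := by
  have hsum : (of fun k j => (F j * ρ * (A k)ᴴ + A j * ρ * (F k)ᴴ).trace)
      = ∑ μ, of fun k j => (⁅Lop μ, F k⁆ᴴ * ⁅Lop μ, F j⁆ * ρ).trace := by
    ext k j
    rw [of_apply, trace_response_eq_sum hH hρ.isHermitian hstat (hFtr k) (hFtr j) (hFeq k)
      (hFeq j), Matrix.sum_apply]
    rfl
  rw [hsum]
  exact posSemidef_sum _ fun μ _ => posSemidef_of_trace_conjTranspose_mul_mul hρ _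

end Lindblad

theorem stmt8_general {n p m : ℕ}
    (L : Matrix (Fin n) (Fin n) ℂ → Matrix (Fin n) (Fin n) ℂ)
    (H : Matrix (Fin n) (Fin n) ℂ) (hH : H.IsHermitian)
    (Lop : Fin p → Matrix (Fin n) (Fin n) ℂ)
    (hL : ∀ ρ, L ρ = (-Complex.I) • (H * ρ - ρ * H) + ∑ μ, dissipator (Lop μ) ρ)
    (ρbar : Matrix (Fin n) (Fin n) ℂ) (hpsd : ρbar.PosSemidef)
    (hstat : L ρbar = 0)
    (A F : Fin m → Matrix (Fin n) (Fin n) ℂ)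
    (hFtr : ∀ k, (F k * ρbar).trace = 0)
    (hFeq : ∀ k, -(L (F k * ρbar)) = A k * ρbar - (A k * ρbar).trace • ρbar) :
    (Matrix.of fun k j : Fin m =>
        (F j * ρbar * (A k)ᴴ + A j * ρbar * (F k)ᴴ).trace).IsHermitian ∧
    (Matrix.of fun k j : Fin m =>
        (F j * ρbar * (A k)ᴴ + A j * ρbar * (F k)ᴴ).trace).PosSemidef ∧
    ∀ A₀ F₀ : Matrix (Fin n) (Fin n) ℂ, (F₀ * ρbar).trace = 0 →
      -(L (F₀ * ρbar)) = A₀ * ρbar - (A₀ * ρbar).trace • ρbar →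
      (F₀ * ρbar * A₀ᴴ + A₀ * ρbar * F₀ᴴ).trace.im = 0 ∧
        0 ≤ (F₀ * ρbar * A₀ᴴ + A₀ * ρbar * F₀ᴴ).trace.re := by
  obtain rfl : L = lindbladian H Lop := funext hL
  have hX := posSemidef_response hH hpsd hstat hFtr hFeq
  refine ⟨hX.isHermitian, hX, fun A₀ F₀ h₀tr h₀eq => ?_⟩
  have h₀ := (posSemidef_response hH hpsd hstat (A := fun _ : Unit => A₀) (F := fun _ => F₀)
    (fun _ => h₀tr) (fun _ => h₀eq)).diag_nonneg (i := ())
  rw [of_apply, Complex.nonneg_iff] at h₀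
  exact ⟨h₀.2.symm, h₀.1⟩

/-- for a Lindblad generator `L` with stationary density matrix `ρ̄` and
matrices `A_k, F_k` with `tr(F_k ρ̄) = 0` and `−L(F_k ρ̄) = A_k ρ̄ − tr(A_k ρ̄)ρ̄`, the
matrix `X_{k,j} = tr(F_j ρ̄ A_k† + A_j ρ̄ F_k†)` is Hermitian positive semidefinite;
in particular for a single pair `(A,F)`, `tr(F ρ̄ A† + A ρ̄ F†) ≥ 0`. -/
theorem stmt8 {n p m : ℕ}
    (L : Matrix (Fin n) (Fin n) ℂ → Matrix (Fin n) (Fin n) ℂ)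
    (H : Matrix (Fin n) (Fin n) ℂ) (hH : H.IsHermitian)
    (Lop : Fin p → Matrix (Fin n) (Fin n) ℂ)
    (hL : ∀ ρ, L ρ = (-Complex.I) • (H * ρ - ρ * H) + ∑ μ, dissipator (Lop μ) ρ)
    (ρbar : Matrix (Fin n) (Fin n) ℂ) (hpsd : ρbar.PosSemidef) (htr : ρbar.trace = 1)
    (hstat : L ρbar = 0)
    (A F : Fin m → Matrix (Fin n) (Fin n) ℂ)
    (hFtr : ∀ k, (F k * ρbar).trace = 0)
    (hFeq : ∀ k, -(L (F k * ρbar)) = A k * ρbar - (A k * ρbar).trace • ρbar) :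
    (Matrix.of fun k j : Fin m =>
        (F j * ρbar * (A k)ᴴ + A j * ρbar * (F k)ᴴ).trace).IsHermitian ∧
    (Matrix.of fun k j : Fin m =>
        (F j * ρbar * (A k)ᴴ + A j * ρbar * (F k)ᴴ).trace).PosSemidef ∧
    ∀ A₀ F₀ : Matrix (Fin n) (Fin n) ℂ, (F₀ * ρbar).trace = 0 →
      -(L (F₀ * ρbar)) = A₀ * ρbar - (A₀ * ρbar).trace • ρbar →
      (F₀ * ρbar * A₀ᴴ + A₀ * ρbar * F₀ᴴ).trace.im = 0 ∧
        0 ≤ (F₀ * ρbar * A₀ᴴ + A₀ * ρbar * F₀ᴴ).trace.re :=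
  stmt8_general L H hH Lop hL ρbar hpsd hstat A F hFtr hFeq
end

section
/- Let A, ρ̄, F be n_A×n_A complex matrices with A Hermitian, let B be a Hermitian n_B×n_B matrix, and let ρ_s be any n_B×n_B matrix. Define K₁ = −i (F ⊗ B)(ρ̄ ⊗ ρ_s) + i (ρ̄ ⊗ ρ_s)(F† ⊗ B). Then tr_A( −i[ A ⊗ B, K₁ ] ) = −i [ ( tr(Fρ̄A − Aρ̄F†) / (2i) ) B², ρ_s ] + tr( Fρ̄A + Aρ̄F† ) ( B ρ_s B − (1/2)(B² ρ_s + ρ_s B²) ). -/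
/-!
Both sides are linear combinations of `B²ρ_s`, `Bρ_sB` and `ρ_sB²`. Writing
`K₁ = −i (Fρ̄) ⊗ (Bρ_s) + i (ρ̄F†) ⊗ (ρ_sB)`, the left side is a combination of partial traces of
commutators of product operators, and `tr_A [X ⊗ Y, Z ⊗ W] = tr(ZX) [Y, W]` by cyclicity of the
trace. Comparing the three coefficients is then scalar arithmetic with `i² = −1`.
-/

open scoped Matrix Kronecker

/-- Partial trace over the first tensor factor:
`(tr_A M)_{j,j'} = Σ_i M_{(i,j),(i,j')}`. -/
noncomputable def ptraceA {nA nB : ℕ}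
    (M : Matrix (Fin nA × Fin nB) (Fin nA × Fin nB) ℂ) :
    Matrix (Fin nB) (Fin nB) ℂ :=
  fun j j' => ∑ i, M (i, j) (i, j')

section PartialTrace

variable {nA nB : ℕ}

lemma ptraceA_add (M N : Matrix (Fin nA × Fin nB) (Fin nA × Fin nB) ℂ) :
    ptraceA (M + N) = ptraceA M + ptraceA N := by
  ext j j'
  simp only [ptraceA, Matrix.add_apply, Finset.sum_add_distrib]

lemma ptraceA_sub (M N : Matrix (Fin nA × Fin nB) (Fin nA × Fin nB) ℂ) :
    ptraceA (M - N) = ptraceA M - ptraceA N := by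
  ext j j'
  simp only [ptraceA, Matrix.sub_apply, Finset.sum_sub_distrib]

lemma ptraceA_smul (c : ℂ) (M : Matrix (Fin nA × Fin nB) (Fin nA × Fin nB) ℂ) :
    ptraceA (c • M) = c • ptraceA M := by
  ext j j'
  simp only [ptraceA, Matrix.smul_apply, smul_eq_mul, Finset.mul_sum]

lemma ptraceA_kronecker (X : Matrix (Fin nA) (Fin nA) ℂ) (Y : Matrix (Fin nB) (Fin nB) ℂ) :
    ptraceA (X ⊗ₖ Y) = X.trace • Y := by
  ext j j'
  simp [ptraceA, Matrix.trace, Finset.sum_mul]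

lemma ptraceA_commutator_kronecker (A X : Matrix (Fin nA) (Fin nA) ℂ)
    (B Y : Matrix (Fin nB) (Fin nB) ℂ) :
    ptraceA ((A ⊗ₖ B) * (X ⊗ₖ Y) - (X ⊗ₖ Y) * (A ⊗ₖ B)) = (X * A).trace • (B * Y - Y * B) := by
  rw [← Matrix.mul_kronecker_mul, ← Matrix.mul_kronecker_mul, ptraceA_sub, ptraceA_kronecker,
    ptraceA_kronecker, Matrix.trace_mul_comm A, smul_sub]

end PartialTrace

lemma commutator_smul_add_smul {R M : Type*} [CommSemiring R] [Ring M] [Algebra R M] (X Y Z : M)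
    (a b : R) :
    X * (a • Y + b • Z) - (a • Y + b • Z) * X = a • (X * Y - Y * X) + b • (X * Z - Z * X) := by
  simp only [mul_add, add_mul, mul_smul_comm, smul_mul_assoc, smul_sub]
  abel

theorem stmt11_general {nA nB : ℕ}
    (A ρbar F : Matrix (Fin nA) (Fin nA) ℂ)
    (B : Matrix (Fin nB) (Fin nB) ℂ)
    (ρs : Matrix (Fin nB) (Fin nB) ℂ) :
    ptraceA ((-Complex.I) • ((A ⊗ₖ B)
          * ((-Complex.I) • ((F ⊗ₖ B) * (ρbar ⊗ₖ ρs))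
            + Complex.I • ((ρbar ⊗ₖ ρs) * (Fᴴ ⊗ₖ B)))
        - ((-Complex.I) • ((F ⊗ₖ B) * (ρbar ⊗ₖ ρs))
            + Complex.I • ((ρbar ⊗ₖ ρs) * (Fᴴ ⊗ₖ B))) * (A ⊗ₖ B)))
      = (-Complex.I) • ((((F * ρbar * A - A * ρbar * Fᴴ).trace / (2 * Complex.I))
            • (B * B)) * ρs
          - ρs * (((F * ρbar * A - A * ρbar * Fᴴ).trace / (2 * Complex.I)) • (B * B)))
        + (F * ρbar * A + A * ρbar * Fᴴ).trace
            • (B * ρs * B - (1 / 2 : ℂ) • (B * B * ρs + ρs * (B * B))) := by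
  rw [← Matrix.mul_kronecker_mul, ← Matrix.mul_kronecker_mul, commutator_smul_add_smul,
    ptraceA_smul, ptraceA_add, ptraceA_smul, ptraceA_smul, ptraceA_commutator_kronecker,
    ptraceA_commutator_kronecker, Matrix.trace_mul_cycle ρbar, Matrix.trace_sub, Matrix.trace_add]
  simp only [Matrix.smul_mul, Matrix.mul_smul, Matrix.mul_assoc]
  match_scalars <;> field_simp <;> rw [Complex.I_sq] <;> ring

/-- with `A` Hermitian on `ℂ^{n_A}`, `B` Hermitian on `ℂ^{n_B}`, and
`K₁ = −i (F⊗B)(ρ̄⊗ρ_s) + i (ρ̄⊗ρ_s)(F†⊗B)`, one has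
`tr_A(−i[A⊗B, K₁]) = −i[(tr(Fρ̄A − Aρ̄F†)/(2i)) B², ρ_s]
  + tr(Fρ̄A + Aρ̄F†)(Bρ_sB − (1/2)(B²ρ_s + ρ_sB²))`. -/
theorem stmt11 {nA nB : ℕ}
    (A ρbar F : Matrix (Fin nA) (Fin nA) ℂ) (hA : A.IsHermitian)
    (B : Matrix (Fin nB) (Fin nB) ℂ) (hB : B.IsHermitian)
    (ρs : Matrix (Fin nB) (Fin nB) ℂ) :
    ptraceA ((-Complex.I) • ((A ⊗ₖ B)
          * ((-Complex.I) • ((F ⊗ₖ B) * (ρbar ⊗ₖ ρs))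
            + Complex.I • ((ρbar ⊗ₖ ρs) * (Fᴴ ⊗ₖ B)))
        - ((-Complex.I) • ((F ⊗ₖ B) * (ρbar ⊗ₖ ρs))
            + Complex.I • ((ρbar ⊗ₖ ρs) * (Fᴴ ⊗ₖ B))) * (A ⊗ₖ B)))
      = (-Complex.I) • ((((F * ρbar * A - A * ρbar * Fᴴ).trace / (2 * Complex.I))
            • (B * B)) * ρs
          - ρs * (((F * ρbar * A - A * ρbar * Fᴴ).trace / (2 * Complex.I)) • (B * B)))
        + (F * ρbar * A + A * ρbar * Fᴴ).trace
            • (B * ρs * B - (1 / 2 : ℂ) • (B * B * ρs + ρs * (B * B))) :=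
  stmt11_general A ρbar F B ρs
end
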